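/- arXiv:1706.06977 — 3 statements merged into one kernel-verified Lean document; each statement's English description precedes it below -/
import Mathlib

section
/- Let s ∈ [p]. For any two vectors β, β̂ ∈ ℝⁿ such that ‖Dᵀβ‖₀ ≤ s, setting u = Dᵀ(β̂ − β), one has ‖Dᵀβ‖_Λ − ‖Dᵀβ̂‖_Λ ≤ Σ_{j=1}^s λ_j |u|^↓_j − Σ_{j=s+1}^p λ_j |u|^↓_j ≤ Λ(λ,s) ‖u‖₂ − Σ_{j=s+1}^p λ_j |u|^↓_j. -/
open MeasureTheory ProbabilityTheory Matrix

/-- The non-increasing rearrangement of the amplitudes `(|θ 1|, …, |θ p|)`. -/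
noncomputable def dsort {p : ℕ} (θ : Fin p → ℝ) : Fin p → ℝ :=
  fun j => |θ (Tuple.sort (fun i => |θ i|) j.rev)|

/-- The ordered ℓ1 (Slope) norm `‖θ‖_Λ = ∑ j, λ_j |θ|^↓_j`. -/
noncomputable def slopeNorm {p : ℕ} (lam θ : Fin p → ℝ) : ℝ :=
  ∑ j, lam j * dsort θ j

/-- The dual norm of the Slope norm: `‖v‖* = sup_{‖θ‖_Λ ≤ 1} ⟨v, θ⟩`. -/
noncomputable def dualSlopeNorm {p : ℕ} (lam v : Fin p → ℝ) : ℝ :=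
  sSup {x : ℝ | ∃ θ : Fin p → ℝ, slopeNorm lam θ ≤ 1 ∧ x = ∑ j, v j * θ j}

/-- Euclidean norm of a vector. -/
noncomputable def enorm2 {n : ℕ} (v : Fin n → ℝ) : ℝ :=
  Real.sqrt (∑ i, (v i) ^ 2)

/-- Number of nonzero entries. -/
noncomputable def l0 {p : ℕ} (u : Fin p → ℝ) : ℕ := Set.ncard {j | u j ≠ 0}

/-- `Λ(λ, s) = (∑_{j=1}^s λ_j²)^{1/2}` (with 0-based indexing: `j < s`). -/
noncomputable def LamS {p : ℕ} (lam : Fin p → ℝ) (s : ℕ) : ℝ :=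
  Real.sqrt (∑ j ∈ Finset.univ.filter (fun j : Fin p => (j : ℕ) < s), (lam j) ^ 2)

/-- `∑_{j=1}^s λ_j |u|^↓_j` (0-based: indices `j < s`). -/
noncomputable def headSum {p : ℕ} (lam : Fin p → ℝ) (s : ℕ) (u : Fin p → ℝ) : ℝ :=
  ∑ j ∈ Finset.univ.filter (fun j : Fin p => (j : ℕ) < s), lam j * dsort u j

/-- `∑_{j=s+1}^p λ_j |u|^↓_j` (0-based: indices `s ≤ j`). -/
noncomputable def tailSum {p : ℕ} (lam : Fin p → ℝ) (s : ℕ) (u : Fin p → ℝ) : ℝ :=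
  ∑ j ∈ Finset.univ.filter (fun j : Fin p => s ≤ (j : ℕ)), lam j * dsort u j

/-- An undirected graph on the vertex set `[n]` with `p` (distinct) edges,
each edge recorded as an ordered pair `(min, max)`. -/
structure GraphOn (n p : ℕ) where
  edge : Fin p → Fin n × Fin n
  lt : ∀ e, (edge e).1 < (edge e).2
  inj : Function.Injective edge

/-- The edge-vertex incidence matrix `Dᵀ ∈ ℝ^{p × n}`:
`(Dᵀ)_{e,v} = +1` if `v = min(i,j)`, `-1` if `v = max(i,j)`, `0` otherwise. -/
def GraphOn.incT {n p : ℕ} (G : GraphOn n p) : Matrix (Fin p) (Fin n) ℝ :=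
  Matrix.of fun e v =>
    if v = (G.edge e).1 then 1 else if v = (G.edge e).2 then -1 else 0

/-- The simple graph associated to a `GraphOn`. -/
def GraphOn.toSimpleGraph {n p : ℕ} (G : GraphOn n p) : SimpleGraph (Fin n) :=
  SimpleGraph.fromRel fun i j => ∃ e, G.edge e = (i, j)

/-- The compatibility factor `κ(s)`. -/
noncomputable def kappa {n p : ℕ} (G : GraphOn n p) (lam : Fin p → ℝ) (s : ℕ) : ℝ :=
  sInf ((fun v : Fin n → ℝ => enorm2 v / enorm2 (G.incT.mulVec v)) ''
    {v : Fin n → ℝ |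
      3 * LamS lam s * enorm2 (G.incT.mulVec v) > tailSum lam s (G.incT.mulVec v)})

/-- The four Penrose conditions: `B` is the Moore–Penrose pseudo-inverse of `A`. -/
def IsMoorePenrose {m k : ℕ} (A : Matrix (Fin m) (Fin k) ℝ)
    (B : Matrix (Fin k) (Fin m) ℝ) : Prop :=
  A * B * A = A ∧ B * A * B = B ∧ (A * B)ᵀ = A * B ∧ (B * A)ᵀ = B * A

/-- `ρ(G) = max_j ‖(Dᵀ)† e_j‖₂`, where `B = (Dᵀ)†`. -/
noncomputable def rhoG {n p : ℕ} (B : Matrix (Fin n) (Fin p) ℝ) : ℝ :=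
  ⨆ j : Fin p, enorm2 (fun i => B i j)

/-- `P` is the matrix of the orthogonal (Euclidean) projection onto `ker Dᵀ`:
symmetric, idempotent, range contained in the kernel, fixing the kernel. -/
def IsOrthProjKer {n p : ℕ} (G : GraphOn n p) (P : Matrix (Fin n) (Fin n) ℝ) : Prop :=
  Pᵀ = P ∧ P * P = P ∧ (∀ v : Fin n → ℝ, G.incT.mulVec (P.mulVec v) = 0) ∧
    ∀ v : Fin n → ℝ, G.incT.mulVec v = 0 → P.mulVec v = v

/-- The Graph-Slope objective `β ↦ (1/(2n))‖y - β‖² + ‖Dᵀβ‖_Λ`. -/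
noncomputable def gslopeObj {n p : ℕ} (G : GraphOn n p) (lam : Fin p → ℝ)
    (y β : Fin n → ℝ) : ℝ :=
  (1 / (2 * (n : ℝ))) * (enorm2 (y - β)) ^ 2 + slopeNorm lam (G.incT.mulVec β)

namespace SlopeAux

variable {p : ℕ}

noncomputable def sperm (θ : Fin p → ℝ) : Equiv.Perm (Fin p) :=
  Fin.revPerm.trans (Tuple.sort (fun i => |θ i|))

lemma dsort_eq (θ : Fin p → ℝ) (j : Fin p) : dsort θ j = |θ (sperm θ j)| := rfl

lemma abs_eq_dsort (θ : Fin p → ℝ) (m : Fin p) :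
    |θ m| = dsort θ ((sperm θ).symm m) := by
  rw [dsort_eq, Equiv.apply_symm_apply]

lemma dsort_antitone (θ : Fin p → ℝ) : Antitone (dsort θ) := by
  intro i j hij
  exact Tuple.monotone_sort (fun i => |θ i|) (Fin.rev_le_rev.mpr hij)

lemma dsort_nonneg (θ : Fin p → ℝ) (j : Fin p) : 0 ≤ dsort θ j := abs_nonneg _

lemma monovary_of_antitone (a d : Fin p → ℝ) (ha : Antitone a) (hd : Antitone d) :
    Monovary a d := by
  intro i j h
  rcases le_total j i with h' | h'
  · exact ha h'
  · exact absurd (hd h') (not_le.mpr h)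

lemma rearr {a d : Fin p → ℝ} (ha : Antitone a) (hd : Antitone d)
    (σ : Equiv.Perm (Fin p)) : ∑ j, a j * d (σ j) ≤ ∑ j, a j * d j :=
  (monovary_of_antitone a d ha hd).sum_mul_comp_perm_le_sum_mul

lemma sum_abs_perm_le_slope {a : Fin p → ℝ} (ha : Antitone a)
    (θ : Fin p → ℝ) (φ : Equiv.Perm (Fin p)) :
    ∑ j, a j * |θ (φ j)| ≤ slopeNorm a θ := by
  have h : ∀ j, |θ (φ j)| = dsort θ ((φ.trans (sperm θ).symm) j) := by
    intro j; rw [abs_eq_dsort]; rfl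
  simp only [h]
  exact rearr ha (dsort_antitone θ) _

/-- truncation of an antitone nonneg sequence is antitone -/
lemma trunc_antitone {a : Fin p → ℝ} (ha : Antitone a) (ha0 : ∀ j, 0 ≤ a j) (s : ℕ) :
    Antitone (fun j : Fin p => if (j : ℕ) < s then a j else 0) := by
  intro i j hij
  by_cases hj : (j : ℕ) < s
  · have hi : (i : ℕ) < s := lt_of_le_of_lt (by exact_mod_cast hij) hj
    simp only [hj, hi, if_pos]
    exact ha hij
  · simp only [hj, if_neg, if_false]
    by_cases hi : (i : ℕ) < s <;> simp [hi, ha0 i]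

lemma head_bound {a : Fin p → ℝ} (ha : Antitone a) (ha0 : ∀ j, 0 ≤ a j) (s : ℕ)
    {d : Fin p → ℝ} (hd : Antitone d) (π : Equiv.Perm (Fin p)) :
    ∑ j ∈ Finset.univ.filter (fun j : Fin p => (j : ℕ) < s), a j * d (π j) ≤
      ∑ j ∈ Finset.univ.filter (fun j : Fin p => (j : ℕ) < s), a j * d j := by
  have h1 : ∀ (f : Fin p → ℝ),
      ∑ j ∈ Finset.univ.filter (fun j : Fin p => (j : ℕ) < s), a j * f j
        = ∑ j : Fin p, (if (j : ℕ) < s then a j else 0) * f j := by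
    intro f
    rw [Finset.sum_filter]
    exact Finset.sum_congr rfl (fun j _ => by by_cases h : (j : ℕ) < s <;> simp [h])
  rw [h1, h1]
  exact rearr (trunc_antitone ha ha0 s) hd π

lemma tail_ge {u : Fin p → ℝ} {φ : Equiv.Perm (Fin p)} {s : ℕ}
    (hy : ∀ i i' : Fin p, s ≤ (i : ℕ) → i ≤ i' → |u (φ i')| ≤ |u (φ i)|)
    {j : Fin p} (hj : s ≤ (j : ℕ)) : dsort u j ≤ |u (φ j)| := by
  by_contra h
  push_neg at h
  set σ := sperm u with hσ
  set M : Finset (Fin p) := (Finset.Iic j).image σ with hM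
  have hcard : M.card = (j : ℕ) + 1 := by
    rw [hM, Finset.card_image_of_injective _ σ.injective, Fin.card_Iic]
  have hmem : ∀ m ∈ M, φ.symm m ∈ Finset.Iio j := by
    intro m hm
    rw [hM, Finset.mem_image] at hm
    obtain ⟨i, hi, rfl⟩ := hm
    rw [Finset.mem_Iic] at hi
    have habs : dsort u j ≤ |u (σ i)| := by
      rw [abs_eq_dsort u (σ i), hσ, Equiv.symm_apply_apply]
      exact dsort_antitone u hi
    rw [Finset.mem_Iio]
    by_contra hge
    push_neg at hge
    have := hy j (φ.symm (σ i)) hj hge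
    rw [Equiv.apply_symm_apply] at this
    exact absurd (lt_of_lt_of_le h (le_trans habs this)) (lt_irrefl _)
  have hinj : Set.InjOn (fun m => φ.symm m) M := fun x _ y _ hxy => φ.symm.injective hxy
  have := Finset.card_le_card_of_injOn _ hmem hinj
  rw [hcard, Fin.card_Iio] at this
  omega

lemma dsort_zero_of_l0 {θ : Fin p → ℝ} {s : ℕ} (h : l0 θ ≤ s)
    {j : Fin p} (hj : s ≤ (j : ℕ)) : dsort θ j = 0 := by
  by_contra hne
  have hpos : 0 < dsort θ j := lt_of_le_of_ne (dsort_nonneg θ j) (Ne.symm hne)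
  set T : Finset (Fin p) := Finset.univ.filter (fun i => θ i ≠ 0) with hT
  have hl0 : l0 θ = T.card := by
    rw [l0]
    have : {i | θ i ≠ 0} = (T : Set (Fin p)) := by ext i; simp [hT]
    rw [this, Set.ncard_coe_finset]
  have hsub : (Finset.Iic j).image (sperm θ) ⊆ T := by
    intro m hm
    rw [Finset.mem_image] at hm
    obtain ⟨i, hi, rfl⟩ := hm
    rw [Finset.mem_Iic] at hi
    have : dsort θ j ≤ |θ (sperm θ i)| := by
      rw [← dsort_eq]; exact dsort_antitone θ hi
    rw [hT, Finset.mem_filter]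
    refine ⟨Finset.mem_univ _, fun h0 => ?_⟩
    rw [h0, abs_zero] at this
    exact absurd (lt_of_lt_of_le hpos this) (lt_irrefl _)
  have := Finset.card_le_card hsub
  rw [Finset.card_image_of_injective _ (sperm θ).injective, Fin.card_Iic] at this
  omega

end SlopeAux

namespace SlopeAux

lemma head_cs {p : ℕ} (a : Fin p → ℝ) (ha0 : ∀ j, 0 ≤ a j) (s : ℕ) (u : Fin p → ℝ) :
    headSum a s u ≤ LamS a s * enorm2 u := by
  set F := Finset.univ.filter (fun j : Fin p => (j : ℕ) < s) with hF
  have hcs := Finset.sum_mul_sq_le_sq_mul_sq F a (dsort u)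
  have hd2 : ∑ j ∈ F, (dsort u j) ^ 2 ≤ ∑ i, (u i) ^ 2 := by
    have h1 : ∑ j ∈ F, (dsort u j) ^ 2 ≤ ∑ j, (dsort u j) ^ 2 :=
      Finset.sum_le_sum_of_subset_of_nonneg (Finset.subset_univ F)
        (fun j _ _ => sq_nonneg _)
    have h2 : ∑ j, (dsort u j) ^ 2 = ∑ i, (u i) ^ 2 := by
      have : ∀ j, (dsort u j) ^ 2 = (fun i => (u i) ^ 2) (sperm u j) := by
        intro j; rw [dsort_eq, sq_abs]
      simp only [this]
      exact Equiv.sum_comp (sperm u) (fun i => (u i) ^ 2)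
    rw [h2] at h1; exact h1
  have hh0 : 0 ≤ headSum a s u :=
    Finset.sum_nonneg (fun j _ => mul_nonneg (ha0 j) (dsort_nonneg u j))
  have ha2 : 0 ≤ ∑ j ∈ F, (a j) ^ 2 := Finset.sum_nonneg (fun j _ => sq_nonneg _)
  have hsq : (headSum a s u) ^ 2 ≤ (∑ j ∈ F, (a j) ^ 2) * ∑ i, (u i) ^ 2 := by
    calc (headSum a s u) ^ 2 ≤ (∑ j ∈ F, (a j) ^ 2) * ∑ j ∈ F, (dsort u j) ^ 2 := hcs
    _ ≤ (∑ j ∈ F, (a j) ^ 2) * ∑ i, (u i) ^ 2 := by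
        exact mul_le_mul_of_nonneg_left hd2 ha2
  calc headSum a s u = Real.sqrt ((headSum a s u) ^ 2) := (Real.sqrt_sq hh0).symm
  _ ≤ Real.sqrt ((∑ j ∈ F, (a j) ^ 2) * ∑ i, (u i) ^ 2) := Real.sqrt_le_sqrt hsq
  _ = LamS a s * enorm2 u := by rw [Real.sqrt_mul ha2, LamS, enorm2, hF]

lemma key {p : ℕ} (a : Fin p → ℝ) (ha : Antitone a) (ha0 : ∀ j, 0 ≤ a j)
    (s : ℕ) (hsp : s ≤ p) (θ u : Fin p → ℝ) (hθ : l0 θ ≤ s) :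
    slopeNorm a θ - slopeNorm a (θ + u) ≤ headSum a s u - tailSum a s u := by
  classical
  have hp : s + (p - s) = p := Nat.add_sub_cancel' hsp
  set σθ := sperm θ with hσθ
  set g : Fin (p - s) → ℝ := fun i => |u (σθ (Fin.cast hp (Fin.natAdd s i)))| with hg
  set ρ : Equiv.Perm (Fin (p - s)) := Fin.revPerm.trans (Tuple.sort g) with hρ
  have hgρ : Antitone (fun i => g (ρ i)) := by
    intro i j hij
    exact Tuple.monotone_sort g (Fin.rev_le_rev.mpr hij)
  set e : Fin p ≃ (Fin s ⊕ Fin (p - s)) := (finCongr hp.symm).trans finSumFinEquiv.symm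
    with he
  set τ : Equiv.Perm (Fin p) :=
    e.trans ((Equiv.sumCongr (Equiv.refl (Fin s)) ρ).trans e.symm) with hτ
  -- computation of e
  have he1 : ∀ (j : Fin p) (h : (j : ℕ) < s), e j = Sum.inl ⟨j, h⟩ := by
    intro j h
    have : (finCongr hp.symm) j = Fin.castAdd (p - s) ⟨j, h⟩ := by
      apply Fin.ext; simp
    rw [he]; simp only [Equiv.trans_apply, this, finSumFinEquiv_symm_apply_castAdd]
  have he2 : ∀ (j : Fin p) (h : s ≤ (j : ℕ)), e j = Sum.inr ⟨(j : ℕ) - s, by omega⟩ := by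
    intro j h
    have : (finCongr hp.symm) j = Fin.natAdd s ⟨(j : ℕ) - s, by omega⟩ := by
      apply Fin.ext; simp; omega
    rw [he]; simp only [Equiv.trans_apply, this, finSumFinEquiv_symm_apply_natAdd]
  have hesymm1 : ∀ (k : Fin s), e.symm (Sum.inl k) = ⟨(k : ℕ), by omega⟩ := by
    intro k
    rw [he]; apply Fin.ext
    simp [finCongr]
  have hesymm2 : ∀ (k : Fin (p - s)), e.symm (Sum.inr k) = ⟨s + (k : ℕ), by omega⟩ := by
    intro k
    rw [he]; apply Fin.ext
    simp [finCongr]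
  have hτ1 : ∀ (j : Fin p), (j : ℕ) < s → τ j = j := by
    intro j h
    rw [hτ]
    simp only [Equiv.trans_apply, he1 j h, Equiv.sumCongr_apply, Sum.map_inl,
      Equiv.refl_apply]
    rw [hesymm1]
  have hτ2 : ∀ (j : Fin p) (h : s ≤ (j : ℕ)),
      τ j = ⟨s + (ρ ⟨(j : ℕ) - s, by omega⟩ : ℕ), by omega⟩ := by
    intro j h
    rw [hτ]
    simp only [Equiv.trans_apply, he2 j h, Equiv.sumCongr_apply, Sum.map_inr]
    rw [hesymm2]
  set φ : Equiv.Perm (Fin p) := τ.trans σθ with hφ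
  set y : Fin p → ℝ := fun j => |u (φ j)| with hy
  -- head values
  have hyhead : ∀ (j : Fin p), (j : ℕ) < s → y j = |u (σθ j)| := by
    intro j h
    rw [hy]; simp only [hφ, Equiv.trans_apply, hτ1 j h]
  -- tail: y via g ∘ ρ
  have hytail : ∀ (j : Fin p) (h : s ≤ (j : ℕ)), y j = g (ρ ⟨(j : ℕ) - s, by omega⟩) := by
    intro j h
    rw [hy]; simp only [hφ, Equiv.trans_apply, hτ2 j h]
    rw [hg]
    congr 2
  -- tail antitone
  have hyanti : ∀ i i' : Fin p, s ≤ (i : ℕ) → i ≤ i' → y i' ≤ y i := by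
    intro i i' hi hii'
    have hi' : s ≤ (i' : ℕ) := le_trans hi (by exact_mod_cast hii')
    rw [hytail i hi, hytail i' hi']
    apply hgρ
    rw [Fin.mk_le_mk]
    exact Nat.sub_le_sub_right (by exact_mod_cast hii') s
  -- tail: θ vanishes
  have hθtail : ∀ (j : Fin p), s ≤ (j : ℕ) → θ (φ j) = 0 := by
    intro j h
    have h1 : |θ (φ j)| = dsort θ (τ j) := by
      rw [hφ]; simp only [Equiv.trans_apply]; rw [dsort_eq, hσθ]
    have h2 : s ≤ ((τ j : Fin p) : ℕ) := by rw [hτ2 j h]; simp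
    have := dsort_zero_of_l0 hθ h2
    rw [← h1] at this
    exact abs_eq_zero.mp this
  -- head: θ value is dsort
  have hθhead : ∀ (j : Fin p), (j : ℕ) < s → |θ (φ j)| = dsort θ j := by
    intro j h
    rw [hφ]; simp only [Equiv.trans_apply, hτ1 j h]; rw [dsort_eq, hσθ]
  -- finsets
  set F : Finset (Fin p) := Finset.univ.filter (fun j : Fin p => (j : ℕ) < s) with hF
  set Fc : Finset (Fin p) := Finset.univ.filter (fun j : Fin p => s ≤ (j : ℕ)) with hFc
  have hFc' : Fc = Finset.univ.filter (fun j : Fin p => ¬ (j : ℕ) < s) := by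
    rw [hFc]; apply Finset.filter_congr; intro j _; simp [not_lt]
  have hsplit : ∀ f : Fin p → ℝ, ∑ j, f j = ∑ j ∈ F, f j + ∑ j ∈ Fc, f j := by
    intro f
    rw [hFc', hF, Finset.sum_filter_add_sum_filter_not]
  -- (1) rearrangement bound on slopeNorm (θ + u)
  have h1 : ∑ j, a j * |(θ + u) (φ j)| ≤ slopeNorm a (θ + u) :=
    sum_abs_perm_le_slope ha (θ + u) φ
  -- (2) pointwise bounds
  have hhead_pt : ∀ j ∈ F, a j * (dsort θ j - y j) ≤ a j * |(θ + u) (φ j)| := by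
    intro j hj
    rw [hF, Finset.mem_filter] at hj
    apply mul_le_mul_of_nonneg_left _ (ha0 j)
    have : |(θ + u) (φ j)| = |θ (φ j) + u (φ j)| := rfl
    rw [this, ← hθhead j hj.2, hyhead j hj.2]
    have habs : |θ (φ j)| - |u (φ j)| ≤ |θ (φ j) + u (φ j)| := by
      have := abs_sub_abs_le_abs_sub (θ (φ j)) (-(u (φ j)))
      simp only [abs_neg, sub_neg_eq_add] at this
      exact this
    have : |u (σθ j)| = |u (φ j)| := by
      rw [hφ]; simp only [Equiv.trans_apply, hτ1 j hj.2]
    rw [this]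
    exact habs
  have htail_pt : ∀ j ∈ Fc, a j * y j = a j * |(θ + u) (φ j)| := by
    intro j hj
    rw [hFc, Finset.mem_filter] at hj
    congr 1
    have : (θ + u) (φ j) = θ (φ j) + u (φ j) := rfl
    rw [hy, this, hθtail j hj.2, zero_add]
  -- (3) slopeNorm θ is a head sum
  have h3 : slopeNorm a θ = ∑ j ∈ F, a j * dsort θ j := by
    rw [slopeNorm, hsplit]
    have : ∑ j ∈ Fc, a j * dsort θ j = 0 := by
      apply Finset.sum_eq_zero
      intro j hj
      rw [hFc, Finset.mem_filter] at hj
      rw [dsort_zero_of_l0 hθ hj.2, mul_zero]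
    rw [this, add_zero]
  -- (4) head bound
  have h4 : ∑ j ∈ F, a j * y j ≤ headSum a s u := by
    have hyd : ∀ j ∈ F, a j * y j = a j * dsort u ((σθ.trans (sperm u).symm) j) := by
      intro j hj
      rw [hF, Finset.mem_filter] at hj
      rw [hyhead j hj.2, abs_eq_dsort]
      rfl
    rw [Finset.sum_congr rfl hyd]
    rw [headSum, ← hF]
    exact head_bound ha ha0 s (dsort_antitone u) _
  -- (5) tail bound
  have h5 : tailSum a s u ≤ ∑ j ∈ Fc, a j * y j := by
    rw [tailSum, ← hFc]
    apply Finset.sum_le_sum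
    intro j hj
    rw [hFc, Finset.mem_filter] at hj
    exact mul_le_mul_of_nonneg_left (tail_ge hyanti hj.2) (ha0 j)
  -- combine
  have hchain : slopeNorm a θ - ∑ j ∈ F, a j * y j + ∑ j ∈ Fc, a j * y j ≤
      slopeNorm a (θ + u) := by
    calc slopeNorm a θ - ∑ j ∈ F, a j * y j + ∑ j ∈ Fc, a j * y j
        = ∑ j ∈ F, a j * (dsort θ j - y j) + ∑ j ∈ Fc, a j * y j := by
          rw [h3, ← Finset.sum_sub_distrib]
          congr 1
          exact Finset.sum_congr rfl (fun j _ => by ring)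
    _ ≤ ∑ j ∈ F, a j * |(θ + u) (φ j)| + ∑ j ∈ Fc, a j * |(θ + u) (φ j)| := by
          apply add_le_add (Finset.sum_le_sum hhead_pt)
          exact le_of_eq (Finset.sum_congr rfl htail_pt)
    _ = ∑ j, a j * |(θ + u) (φ j)| := (hsplit _).symm
    _ ≤ slopeNorm a (θ + u) := h1
  linarith

end SlopeAux

/-- Lemma A.1 (slope-norm algebra along the incidence matrix). -/
theorem statement_4 {n p : ℕ} (G : GraphOn n p) (hconn : G.toSimpleGraph.Connected)
    (lam : Fin p → ℝ) (hmono : Antitone lam) (hnonneg : ∀ j, 0 ≤ lam j) (hne : lam ≠ 0)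
    (s : ℕ) (hs1 : 1 ≤ s) (hsp : s ≤ p)
    (β βhat : Fin n → ℝ) (hβ : l0 (G.incT.mulVec β) ≤ s) :
    slopeNorm lam (G.incT.mulVec β) - slopeNorm lam (G.incT.mulVec βhat) ≤
        headSum lam s (G.incT.mulVec (βhat - β)) -
          tailSum lam s (G.incT.mulVec (βhat - β)) ∧
      headSum lam s (G.incT.mulVec (βhat - β)) -
          tailSum lam s (G.incT.mulVec (βhat - β)) ≤
        LamS lam s * enorm2 (G.incT.mulVec (βhat - β)) -
          tailSum lam s (G.incT.mulVec (βhat - β)) := by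
  set θ := G.incT.mulVec β with hθd
  set u := G.incT.mulVec (βhat - β) with hud
  have hw : G.incT.mulVec βhat = θ + u := by
    rw [hud, hθd, Matrix.mulVec_sub]
    abel
  constructor
  · have hk := SlopeAux.key lam hmono hnonneg s hsp θ u hβ
    rwa [← hw] at hk
  · have hcs := SlopeAux.head_cs lam hnonneg s u
    linarith
end

section
/- For any vectors v, w ∈ ℝ^p with ‖v‖₀ ≤ s, setting u = w − v, one has ‖v‖_Λ − ‖w‖_Λ ≤ Σ_{j=1}^s λ_j |u|^↓_j − Σ_{j=s+1}^p λ_j |u|^↓_j. -/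
open MeasureTheory ProbabilityTheory Matrix

/-!
Write `T_k(θ)` for the sum of the `k` largest `|θ_i|`; it is the largest sum of `|θ_i|` over a
set of at most `k` indices. Since `λ` is nonnegative and nonincreasing, Abel summation reduces
the claim to the nonnegativity of its partial sums: with `u = w - v`,
`T_k(w) - T_k(v) + T_k(u) ≥ 0` for `k ≤ s`, which is the triangle inequality for `T_k`, and
`T_k(w) - T_k(v) + 2 T_s(u) - T_k(u) ≥ 0` for `k ≥ s`. For the latter take a set `A` of `k`
indices carrying `T_k(u)` and the support `S` of `v`, with `|S| ≤ s`; off `S` we have `u = w`.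
Moving `|S \ A|` indices of `A \ S` next to `A ∩ S` splits `A` into a set of at most `s` indices,
bounded by `T_s(u)`, and a subset of `A \ S` which together with `S` has at most `k` indices and
is bounded through `w`; the remaining `Σ_S |v| ≤ Σ_S |w| + Σ_S |u|` costs another `T_s(u)`.
-/

section OrderedL1

open Finset

theorem sum_mul_nonneg_of_antitone_of_partialSums_nonneg {p : ℕ} {f c : Fin p → ℝ}
    (hf : Antitone f) (hf0 : ∀ j, 0 ≤ f j)
    (hc : ∀ k ≤ p, 0 ≤ ∑ j : Fin p with j.val < k, c j) :
    0 ≤ ∑ j, f j * c j := by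
  set F : ℕ → ℝ := fun i => if h : i < p then f ⟨i, h⟩ else 0
  set C : ℕ → ℝ := fun i => if h : i < p then c ⟨i, h⟩ else 0
  have hpartial : ∀ k ≤ p, ∑ i ∈ range k, C i = ∑ j : Fin p with j.val < k, c j := by
    intro k hk
    have hmap : ({j : Fin p | j.val < k} : Finset (Fin p)).map Fin.valEmbedding = range k := by
      ext i
      simp only [mem_map, mem_filter, mem_univ, true_and, Fin.valEmbedding_apply, mem_range]
      exact ⟨fun ⟨j, hj, hji⟩ => hji ▸ hj, fun hi => ⟨⟨i, by omega⟩, hi, rfl⟩⟩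
    rw [← hmap, sum_map]
    exact sum_congr rfl fun j _ => by simp [C]
  have hsum : ∑ j, f j * c j = ∑ i ∈ range p, F i • C i := by
    rw [← Fin.sum_univ_eq_sum_range]
    simp [F, C]
  have hC : ∀ k ≤ p, 0 ≤ ∑ i ∈ range k, C i := fun k hk => hpartial k hk ▸ hc k hk
  rw [hsum, sum_range_by_parts]
  refine sub_nonneg.mpr (le_trans (sum_nonpos fun i hi => ?_) ?_)
  · have hi : i + 1 < p := by rw [mem_range] at hi; omega
    have hF : F (i + 1) ≤ F i := by
      simp only [F, dif_pos hi, dif_pos (by omega : i < p)]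
      exact hf (Fin.mk_le_mk.mpr (by omega))
    exact mul_nonpos_of_nonpos_of_nonneg (by linarith) (hC _ hi.le)
  · rcases Nat.eq_zero_or_pos p with hp | hp
    · simp [hp]
    · have hFlast : 0 ≤ F (p - 1) := by simp only [F, dif_pos (by omega : p - 1 < p)]; exact hf0 _
      exact smul_nonneg hFlast (hC p le_rfl)

variable {p : ℕ}

theorem sum_le_sum_val_lt_of_antitone {g : Fin p → ℝ} (hg : Antitone g) (hg0 : ∀ j, 0 ≤ g j)
    {T : Finset (Fin p)} {k : ℕ} (hT : #T ≤ k) :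
    ∑ j ∈ T, g j ≤ ∑ j : Fin p with j.val < k, g j := by
  set I : Finset (Fin p) := {j | j.val < k}
  rcases lt_or_ge k p with hk | hk
  · have hcard : #(T \ I) ≤ #(I \ T) := by
      rw [card_sdiff_le_card_sdiff_iff, Fin.card_filter_val_lt]
      omega
    set m := g ⟨k, hk⟩
    have hout : ∑ j ∈ T \ I, g j ≤ #(T \ I) • m := by
      refine sum_le_card_nsmul _ _ _ fun j hj => hg (Fin.mk_le_mk.mpr ?_)
      simpa [I] using (mem_sdiff.mp hj).2
    have hin : #(I \ T) • m ≤ ∑ j ∈ I \ T, g j := by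
      refine card_nsmul_le_sum _ _ _ fun j hj => hg (Fin.le_def.mpr ?_)
      have hjI := (mem_sdiff.mp hj).1
      simp only [I, mem_filter, mem_univ, true_and] at hjI
      exact hjI.le
    have hm : #(T \ I) • m ≤ #(I \ T) • m := nsmul_le_nsmul_left (hg0 _) hcard
    calc ∑ j ∈ T, g j = ∑ j ∈ T ∩ I, g j + ∑ j ∈ T \ I, g j := (sum_inter_add_sum_sdiff _ _ _).symm
      _ ≤ ∑ j ∈ I ∩ T, g j + ∑ j ∈ I \ T, g j := by rw [inter_comm]; linarith
      _ = ∑ j ∈ I, g j := sum_inter_add_sum_sdiff _ _ _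
  · have hI : I = univ := filter_true_of_mem fun j _ => by omega
    rw [hI]
    exact sum_le_sum_of_subset_of_nonneg (subset_univ T) fun j _ _ => hg0 j

noncomputable def sortPerm (θ : Fin p → ℝ) : Equiv.Perm (Fin p) :=
  Fin.revPerm.trans (Tuple.sort fun i => |θ i|)

theorem dsort_eq_abs_sortPerm (θ : Fin p → ℝ) (j : Fin p) : dsort θ j = |θ (sortPerm θ j)| := rfl

theorem dsort_nonneg (θ : Fin p → ℝ) (j : Fin p) : 0 ≤ dsort θ j := abs_nonneg _

theorem dsort_antitone (θ : Fin p → ℝ) : Antitone (dsort θ) :=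
  fun _ _ hij => Tuple.monotone_sort (fun i => |θ i|) (Fin.rev_le_rev.mpr hij)

noncomputable def topSum (θ : Fin p → ℝ) (k : ℕ) : ℝ :=
  ∑ j : Fin p with j.val < k, dsort θ j

theorem sum_abs_le_topSum (θ : Fin p → ℝ) {T : Finset (Fin p)} {k : ℕ} (hT : #T ≤ k) :
    ∑ i ∈ T, |θ i| ≤ topSum θ k := by
  have hreindex : ∑ j ∈ T.map (sortPerm θ).symm.toEmbedding, dsort θ j = ∑ i ∈ T, |θ i| := by
    simp [dsort_eq_abs_sortPerm]
  rw [← hreindex]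
  exact sum_le_sum_val_lt_of_antitone (dsort_antitone θ) (dsort_nonneg θ) (by simpa using hT)

theorem exists_card_eq_sum_abs_eq_topSum (θ : Fin p → ℝ) {k : ℕ} (hk : k ≤ p) :
    ∃ T : Finset (Fin p), #T = k ∧ ∑ i ∈ T, |θ i| = topSum θ k := by
  refine ⟨({j : Fin p | j.val < k} : Finset (Fin p)).map (sortPerm θ).toEmbedding, ?_, ?_⟩
  · rw [card_map, Fin.card_filter_val_lt]
    exact min_eq_right hk
  · simp [topSum, dsort_eq_abs_sortPerm]

theorem topSum_le_sum_abs (θ : Fin p → ℝ) (k : ℕ) : topSum θ k ≤ ∑ i, |θ i| := by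
  calc topSum θ k ≤ ∑ j, dsort θ j :=
        sum_le_sum_of_subset_of_nonneg (subset_univ _) fun j _ _ => dsort_nonneg θ j
    _ = ∑ i, |θ i| := Equiv.sum_comp (sortPerm θ) (fun i => |θ i|)

theorem topSum_sub_le (a b : Fin p → ℝ) {k : ℕ} (hk : k ≤ p) :
    topSum (a - b) k ≤ topSum a k + topSum b k := by
  obtain ⟨T, hTk, hT⟩ := exists_card_eq_sum_abs_eq_topSum (a - b) hk
  calc topSum (a - b) k = ∑ i ∈ T, |a i - b i| := by simp [← hT]
    _ ≤ ∑ i ∈ T, |a i| + ∑ i ∈ T, |b i| := by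
        rw [← sum_add_distrib]; exact sum_le_sum fun i _ => abs_sub _ _
    _ ≤ topSum a k + topSum b k :=
        add_le_add (sum_abs_le_topSum a hTk.le) (sum_abs_le_topSum b hTk.le)

theorem topSum_add_topSum_sub_le {v : Fin p → ℝ} (w : Fin p → ℝ) {s k : ℕ}
    (hv : #{i | v i ≠ 0} ≤ s) (hsk : s ≤ k) (hk : k ≤ p) :
    topSum v k + topSum (w - v) k ≤ topSum w k + 2 * topSum (w - v) s := by
  set u := w - v
  set S : Finset (Fin p) := {i | v i ≠ 0}
  have hv_off : ∀ i ∉ S, v i = 0 := fun i hi => by simpa [S] using hi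
  obtain ⟨A, hAk, hA⟩ := exists_card_eq_sum_abs_eq_topSum u hk
  -- Trade `#(S \ A)` indices of `A \ S` into the head, so that both index sets below fit.
  obtain ⟨R, hRA, hR⟩ := exists_subset_card_eq (card_sdiff_le_card_sdiff_iff.mpr (by omega) :
    #(S \ A) ≤ #(A \ S))
  set O := (A \ S) \ R
  have hdisjR : Disjoint (A ∩ S) R :=
    disjoint_left.mpr fun i hi hiR => (mem_sdiff.mp (hRA hiR)).2 (mem_inter.mp hi).2
  have hdisjO : Disjoint S O :=
    disjoint_left.mpr fun i hiS hiO => (mem_sdiff.mp (mem_sdiff.mp hiO).1).2 hiS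
  have hSA := card_sdiff_add_card_inter S A
  have hAS := card_sdiff_add_card_inter A S
  rw [inter_comm] at hSA
  have hhead : #(A ∩ S ∪ R) ≤ s := by
    rw [card_union_of_disjoint hdisjR]
    omega
  have hbody : #(S ∪ O) ≤ k := by
    rw [card_union_of_disjoint hdisjO, card_sdiff_of_subset hRA]
    omega
  have hAsplit : topSum u k = ∑ i ∈ A ∩ S ∪ R, |u i| + ∑ i ∈ O, |w i| := by
    have huO : ∑ i ∈ O, |u i| = ∑ i ∈ O, |w i| := sum_congr rfl fun i hi => by
      simp [u, hv_off i (disjoint_right.mp hdisjO hi)]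
    rw [← hA, ← sum_inter_add_sum_sdiff A S, ← sum_sdiff hRA, sum_union hdisjR, huO]
    ring
  have hvS : topSum v k ≤ ∑ i ∈ S, |w i| + ∑ i ∈ S, |u i| := by
    calc topSum v k ≤ ∑ i, |v i| := topSum_le_sum_abs v k
      _ = ∑ i ∈ S, |w i - u i| := by
          rw [← sum_subset (subset_univ S) fun i _ hi => by simp [hv_off i hi]]
          simp [u]
      _ ≤ ∑ i ∈ S, |w i| + ∑ i ∈ S, |u i| := by
          rw [← sum_add_distrib]; exact sum_le_sum fun i _ => abs_sub _ _
  have hwk : ∑ i ∈ S ∪ O, |w i| = ∑ i ∈ S, |w i| + ∑ i ∈ O, |w i| := sum_union hdisjO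
  have hheadSum := sum_abs_le_topSum u hhead
  have hSSum := sum_abs_le_topSum u hv
  have hbodySum := sum_abs_le_topSum w hbody
  linarith

noncomputable def signedDsort (s : ℕ) (u : Fin p → ℝ) (j : Fin p) : ℝ :=
  if j.val < s then dsort u j else -dsort u j

theorem headSum_sub_tailSum (lam : Fin p → ℝ) (s : ℕ) (u : Fin p → ℝ) :
    headSum lam s u - tailSum lam s u = ∑ j, lam j * signedDsort s u j := by
  rw [headSum, tailSum, sum_filter, sum_filter, ← sum_sub_distrib]
  refine sum_congr rfl fun j _ => ?_
  by_cases hj : j.val < s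
  · simp [signedDsort, hj]
  · simp [signedDsort, hj, not_lt.mp hj]

theorem sum_val_lt_signedDsort (s k : ℕ) (u : Fin p → ℝ) :
    ∑ j : Fin p with j.val < k, signedDsort s u j = 2 * topSum u (min k s) - topSum u k := by
  have hhead : filter (fun j => j.val < s) {j : Fin p | j.val < k} =
      ({j : Fin p | j.val < min k s} : Finset (Fin p)) := by
    ext j; simp
  simp only [signedDsort]
  rw [sum_ite, sum_neg_distrib, topSum, topSum,
    ← sum_filter_add_sum_filter_not {j : Fin p | j.val < k} (fun j => j.val < s), hhead]
  ring

theorem sum_val_lt_dsort_sub_add_signedDsort_nonneg {v : Fin p → ℝ} (w : Fin p → ℝ) {s k : ℕ}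
    (hv : #{i | v i ≠ 0} ≤ s) (hk : k ≤ p) :
    0 ≤ ∑ j : Fin p with j.val < k, (dsort w j - dsort v j + signedDsort s (w - v) j) := by
  rw [sum_add_distrib, sum_sub_distrib, sum_val_lt_signedDsort]
  change 0 ≤ topSum w k - topSum v k + (2 * topSum (w - v) (min k s) - topSum (w - v) k)
  rcases le_total k s with hks | hsk
  · have htriangle := topSum_sub_le w (w - v) hk
    rw [sub_sub_cancel] at htriangle
    rw [min_eq_left hks]
    linarith
  · have hexchange := topSum_add_topSum_sub_le w hv hsk hk
    rw [min_eq_right hsk]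
    linarith

end OrderedL1

theorem statement_5_general {p : ℕ} (lam : Fin p → ℝ)
    (hmono : Antitone lam) (hnonneg : ∀ j, 0 ≤ lam j)
    (s : ℕ)
    (v w : Fin p → ℝ) (hv : l0 v ≤ s) :
    slopeNorm lam v - slopeNorm lam w ≤ headSum lam s (w - v) - tailSum lam s (w - v) := by
  have hsupp : (Finset.univ.filter fun i => v i ≠ 0).card ≤ s := by
    rwa [← Set.ncard_coe_finset, Finset.coe_filter_univ]
  have hgap : headSum lam s (w - v) - tailSum lam s (w - v) - (slopeNorm lam v - slopeNorm lam w) =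
      ∑ j, lam j * (dsort w j - dsort v j + signedDsort s (w - v) j) := by
    simp only [headSum_sub_tailSum, slopeNorm, mul_add, mul_sub, Finset.sum_add_distrib,
      Finset.sum_sub_distrib]
    ring
  have habel := sum_mul_nonneg_of_antitone_of_partialSums_nonneg hmono hnonneg
    fun k hk => sum_val_lt_dsort_sub_add_signedDsort_nonneg w hsupp hk
  linarith

/-- slope-norm algebra for plain vectors. -/
theorem statement_5 {p : ℕ} (lam : Fin p → ℝ)
    (hmono : Antitone lam) (hnonneg : ∀ j, 0 ≤ lam j) (hne : lam ≠ 0)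
    (s : ℕ) (hs1 : 1 ≤ s) (hsp : s ≤ p)
    (v w : Fin p → ℝ) (hv : l0 v ≤ s) :
    slopeNorm lam v - slopeNorm lam w ≤ headSum lam s (w - v) - tailSum lam s (w - v) :=
  statement_5_general lam hmono hnonneg s v w hv
end

section
/- Strong duality holds between the Graph-Slope primal problem min_{β ∈ ℝⁿ} (1/2)‖y − β‖² + ‖Dᵀβ‖_Λ and the dual problem min_{θ ∈ ℝ^p : ‖θ‖* ≤ 1} (1/2)‖Dθ − y‖² − (1/2)‖y‖²: if θ̂ minimizes (1/2)‖Dθ − y‖² over {θ : ‖θ‖* ≤ 1}, then β̂ := y − Dθ̂ minimizes the primal objective, and the duality gap at (β̂, θ̂) vanishes, i.e., (1/2)‖y − β̂‖² + ‖Dᵀβ̂‖_Λ + (1/2)‖Dθ̂ − y‖² − (1/2)‖y‖² = 0. -/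
open MeasureTheory ProbabilityTheory Matrix

/-!
For all `β` and `θ` the duality gap equals `(‖Dᵀβ‖_Λ - ⟪θ, Dᵀβ⟫) + ½‖y - β - Dθ‖²`; for `θ` in
the dual ball both terms are nonnegative, because `⟪θ, u⟫ ≤ ‖u‖_Λ` there (weak duality). At
`β̂ = y - Dθ̂` the square vanishes, and the first-order optimality condition of `θ̂` on the convex
dual ball, tested against a `θ` with `⟪θ, Dᵀβ̂⟫ = ‖Dᵀβ̂‖_Λ`, kills the first term. Zero gap at
`(β̂, θ̂)` and weak duality at `(β, θ̂)` then make `β̂` a primal minimizer.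
-/

open Filter Topology

section SlopeNorm

variable {p : ℕ}

noncomputable def dsortPerm (v : Fin p → ℝ) : Equiv.Perm (Fin p) :=
  Fin.revPerm.trans (Tuple.sort fun i => |v i|)

theorem dsort_eq_abs_dsortPerm (v : Fin p → ℝ) (j : Fin p) :
    dsort v j = |v (dsortPerm v j)| := rfl

theorem antitone_dsort (v : Fin p → ℝ) : Antitone (dsort v) :=
  fun _ _ hjk => Tuple.monotone_sort (fun i => |v i|) (Fin.rev_le_rev.2 hjk)

theorem sum_mul_abs_comp_perm_le_slopeNorm {lam : Fin p → ℝ} (hmono : Antitone lam)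
    (v : Fin p → ℝ) (π : Equiv.Perm (Fin p)) : ∑ j, lam j * |v (π j)| ≤ slopeNorm lam v := by
  have hmv : Monovary lam (dsort v) := fun i j hij =>
    hmono (not_le.1 fun hji => (antitone_dsort v hji).not_gt hij).le
  calc ∑ j, lam j * |v (π j)| = ∑ j, lam j * dsort v ((π.trans (dsortPerm v).symm) j) := by
        simp [dsort_eq_abs_dsortPerm]
    _ ≤ slopeNorm lam v := hmv.sum_smul_comp_perm_le_sum_smul

theorem slopeNorm_smul_le {lam : Fin p → ℝ} (hmono : Antitone lam) {c : ℝ} (hc : 0 ≤ c)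
    (v : Fin p → ℝ) : slopeNorm lam (c • v) ≤ c * slopeNorm lam v := by
  calc slopeNorm lam (c • v) = c * ∑ j, lam j * |v (dsortPerm (c • v) j)| := by
        simp only [slopeNorm, dsort_eq_abs_dsortPerm, Finset.mul_sum, Pi.smul_apply, smul_eq_mul,
          abs_mul, abs_of_nonneg hc]
        exact Finset.sum_congr rfl fun _ _ => by ring
    _ ≤ c * slopeNorm lam v :=
        mul_le_mul_of_nonneg_left (sum_mul_abs_comp_perm_le_slopeNorm hmono v _) hc

theorem slopeNorm_nonneg {lam : Fin p → ℝ} (hnonneg : ∀ j, 0 ≤ lam j) (v : Fin p → ℝ) :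
    0 ≤ slopeNorm lam v :=
  Finset.sum_nonneg fun j _ => mul_nonneg (hnonneg j) (abs_nonneg _)

theorem mul_abs_le_slopeNorm {lam : Fin p → ℝ} (hmono : Antitone lam) (hnonneg : ∀ j, 0 ≤ lam j)
    (v : Fin p → ℝ) (i j : Fin p) : lam j * |v i| ≤ slopeNorm lam v :=
  calc lam j * |v i| = lam j * |v (Equiv.swap j i j)| := by rw [Equiv.swap_apply_left]
    _ ≤ ∑ k, lam k * |v (Equiv.swap j i k)| :=
        Finset.single_le_sum (f := fun k => lam k * |v (Equiv.swap j i k)|)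
          (fun k _ => mul_nonneg (hnonneg k) (abs_nonneg _)) (Finset.mem_univ j)
    _ ≤ slopeNorm lam v := sum_mul_abs_comp_perm_le_slopeNorm hmono v _

end SlopeNorm

section DualSlopeNorm

variable {p : ℕ} {lam : Fin p → ℝ}

theorem bddAbove_dotProduct_slopeNorm_le_one (hmono : Antitone lam) (hnonneg : ∀ j, 0 ≤ lam j)
    {j : Fin p} (hj : 0 < lam j) (θ : Fin p → ℝ) :
    BddAbove {x : ℝ | ∃ u : Fin p → ℝ, slopeNorm lam u ≤ 1 ∧ x = θ ⬝ᵥ u} := by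
  refine ⟨(∑ i, |θ i|) / lam j, ?_⟩
  rintro _ ⟨u, hu, rfl⟩
  have hu_le (i : Fin p) : |u i| ≤ 1 / lam j :=
    (le_div_iff₀' hj).2 ((mul_abs_le_slopeNorm hmono hnonneg u i j).trans hu)
  calc θ ⬝ᵥ u ≤ ∑ i, |θ i| * (1 / lam j) := Finset.sum_le_sum fun i _ =>
        (le_abs_self _).trans <| (abs_mul (θ i) (u i)).trans_le <|
          mul_le_mul_of_nonneg_left (hu_le i) (abs_nonneg _)
    _ = (∑ i, |θ i|) / lam j := by rw [← Finset.sum_mul, mul_one_div]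

theorem dualSlopeNorm_le_one_iff (hmono : Antitone lam) (hnonneg : ∀ j, 0 ≤ lam j)
    {j : Fin p} (hj : 0 < lam j) {θ : Fin p → ℝ} :
    dualSlopeNorm lam θ ≤ 1 ↔ ∀ u, slopeNorm lam u ≤ 1 → θ ⬝ᵥ u ≤ 1 := by
  refine ⟨fun hθ u hu => ?_, fun h => Real.sSup_le ?_ zero_le_one⟩
  · exact (le_csSup (bddAbove_dotProduct_slopeNorm_le_one hmono hnonneg hj θ)
      ⟨u, hu, rfl⟩).trans hθ
  · rintro _ ⟨u, hu, rfl⟩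
    exact h u hu

theorem convex_setOf_dualSlopeNorm_le_one (hmono : Antitone lam) (hnonneg : ∀ j, 0 ≤ lam j)
    {j : Fin p} (hj : 0 < lam j) : Convex ℝ {θ : Fin p → ℝ | dualSlopeNorm lam θ ≤ 1} := by
  intro θ₁ h₁ θ₂ h₂ a b ha hb hab
  simp only [Set.mem_ofPred_eq, dualSlopeNorm_le_one_iff hmono hnonneg hj] at h₁ h₂ ⊢
  intro u hu
  calc (a • θ₁ + b • θ₂) ⬝ᵥ u = a * (θ₁ ⬝ᵥ u) + b * (θ₂ ⬝ᵥ u) := by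
        simp only [add_dotProduct, smul_dotProduct, smul_eq_mul]
    _ ≤ a * 1 + b * 1 := by gcongr <;> [exact h₁ u hu; exact h₂ u hu]
    _ = 1 := by rw [mul_one, mul_one, hab]

theorem dotProduct_le_slopeNorm (hmono : Antitone lam) (hnonneg : ∀ j, 0 ≤ lam j)
    {j : Fin p} (hj : 0 < lam j) {θ : Fin p → ℝ} (hθ : dualSlopeNorm lam θ ≤ 1)
    (v : Fin p → ℝ) : θ ⬝ᵥ v ≤ slopeNorm lam v := by
  refine le_of_forall_pos_le_add fun ε hε => ?_
  set s := slopeNorm lam v + ε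
  have hs : 0 < s := add_pos_of_nonneg_of_pos (slopeNorm_nonneg hnonneg v) hε
  have hball : slopeNorm lam (s⁻¹ • v) ≤ 1 :=
    (slopeNorm_smul_le hmono (inv_nonneg.2 hs.le) v).trans <|
      (inv_mul_le_one₀ hs).2 (le_add_of_nonneg_right hε.le)
  have h := (dualSlopeNorm_le_one_iff hmono hnonneg hj).1 hθ _ hball
  rw [dotProduct_smul, smul_eq_mul, inv_mul_le_one₀ hs] at h
  exact h

theorem sign_mul_le_abs (x t : ℝ) : (SignType.sign x : ℝ) * t ≤ |t| := by
  rcases lt_trichotomy x 0 with hx | hx | hx <;> simp [hx, neg_le_abs, le_abs_self]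

theorem exists_dualSlopeNorm_le_one_dotProduct_eq (hmono : Antitone lam)
    (hnonneg : ∀ j, 0 ≤ lam j) (v : Fin p → ℝ) :
    ∃ θ, dualSlopeNorm lam θ ≤ 1 ∧ θ ⬝ᵥ v = slopeNorm lam v := by
  set τ := dsortPerm v
  have hsum (w : Fin p → ℝ) :
      ∑ i, lam (τ.symm i) * |w i| = ∑ k, lam k * |w (τ k)| := by
    rw [← Equiv.sum_comp τ]
    simp only [Equiv.symm_apply_apply]
  -- the weights placed along the decreasing rearrangement of `|v|`, with the signs of `v`
  refine ⟨fun i => SignType.sign (v i) * lam (τ.symm i), Real.sSup_le ?_ zero_le_one, ?_⟩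
  · rintro _ ⟨u, hu, rfl⟩
    calc ∑ i, SignType.sign (v i) * lam (τ.symm i) * u i ≤ ∑ i, lam (τ.symm i) * |u i| :=
          Finset.sum_le_sum fun i _ => by
            rw [mul_right_comm, mul_comm (lam _)]
            exact mul_le_mul_of_nonneg_right (sign_mul_le_abs _ _) (hnonneg _)
      _ ≤ 1 := (hsum u).trans_le ((sum_mul_abs_comp_perm_le_slopeNorm hmono u τ).trans hu)
  · calc ∑ i, SignType.sign (v i) * lam (τ.symm i) * v i = ∑ i, lam (τ.symm i) * |v i| := by
          simp only [mul_right_comm _ _ (v _), sign_mul_self, mul_comm |v _|]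
      _ = slopeNorm lam v := hsum v

end DualSlopeNorm

theorem enorm2_sq {n : ℕ} (v : Fin n → ℝ) : enorm2 v ^ 2 = v ⬝ᵥ v := by
  rw [enorm2, Real.sq_sqrt (Finset.sum_nonneg fun i _ => sq_nonneg (v i))]
  simp only [dotProduct, sq]

theorem nonneg_of_forall_add_mul_nonneg {a b : ℝ}
    (h : ∀ t : ℝ, 0 < t → t ≤ 1 → 0 ≤ a + t * b) : 0 ≤ a := by
  have hlim : Tendsto (fun t => a + t * b) (𝓝[>] 0) (𝓝 a) := by
    refine tendsto_nhdsWithin_of_tendsto_nhds ?_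
    simpa using ((continuous_id.mul continuous_const).const_add a).tendsto 0
  refine ge_of_tendsto hlim ?_
  filter_upwards [Ioo_mem_nhdsGT one_pos] with t ht using h t ht.1 ht.2.le

theorem dotProduct_mulVec_sub_nonneg_of_isMinOn {n : ℕ} {k : Type*} [Fintype k]
    {A : Matrix (Fin n) k ℝ} {y : Fin n → ℝ} {K : Set (k → ℝ)} (hK : Convex ℝ K)
    {x₀ x : k → ℝ} (hx₀ : x₀ ∈ K) (hx : x ∈ K)
    (hmin : IsMinOn (fun x => (1 / 2) * enorm2 (A *ᵥ x - y) ^ 2) K x₀) :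
    0 ≤ (A *ᵥ x₀ - y) ⬝ᵥ (A *ᵥ (x - x₀)) := by
  set r := A *ᵥ x₀ - y
  set d := A *ᵥ (x - x₀)
  refine nonneg_of_forall_add_mul_nonneg (b := (1 / 2) * (d ⬝ᵥ d)) fun t ht₀ ht₁ => ?_
  have hmem := hK.add_smul_sub_mem hx₀ hx ⟨ht₀.le, ht₁⟩
  have hle := isMinOn_iff.1 hmin _ hmem
  have hexp : A *ᵥ (x₀ + t • (x - x₀)) - y = r + t • d := by
    rw [mulVec_add, mulVec_smul, add_sub_right_comm]
  simp only [hexp, enorm2_sq, add_dotProduct, dotProduct_add, smul_dotProduct,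
    dotProduct_smul, smul_eq_mul, dotProduct_comm d r] at hle
  nlinarith

section Duality

variable {n p : ℕ}

noncomputable def dualityGap (A : Matrix (Fin p) (Fin n) ℝ) (lam : Fin p → ℝ)
    (y β : Fin n → ℝ) (θ : Fin p → ℝ) : ℝ :=
  (1 / 2) * enorm2 (y - β) ^ 2 + slopeNorm lam (A *ᵥ β) + (1 / 2) * enorm2 (Aᵀ *ᵥ θ - y) ^ 2 -
    (1 / 2) * enorm2 y ^ 2

theorem dualityGap_eq (A : Matrix (Fin p) (Fin n) ℝ) (lam : Fin p → ℝ) (y β : Fin n → ℝ)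
    (θ : Fin p → ℝ) :
    dualityGap A lam y β θ =
      (slopeNorm lam (A *ᵥ β) - θ ⬝ᵥ (A *ᵥ β)) + (1 / 2) * enorm2 (y - β - Aᵀ *ᵥ θ) ^ 2 := by
  have hθ : θ ⬝ᵥ (A *ᵥ β) = (Aᵀ *ᵥ θ) ⬝ᵥ β := by rw [dotProduct_mulVec, mulVec_transpose]
  simp only [dualityGap, enorm2_sq, hθ, sub_dotProduct, dotProduct_sub]
  linarith [dotProduct_comm y β, dotProduct_comm y (Aᵀ *ᵥ θ), dotProduct_comm β (Aᵀ *ᵥ θ)]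

theorem dualityGap_nonneg {A : Matrix (Fin p) (Fin n) ℝ} {lam : Fin p → ℝ}
    (hmono : Antitone lam) (hnonneg : ∀ j, 0 ≤ lam j) {j : Fin p} (hj : 0 < lam j)
    (y β : Fin n → ℝ) {θ : Fin p → ℝ} (hθ : dualSlopeNorm lam θ ≤ 1) :
    0 ≤ dualityGap A lam y β θ := by
  rw [dualityGap_eq]
  exact add_nonneg (sub_nonneg.2 (dotProduct_le_slopeNorm hmono hnonneg hj hθ _))
    (mul_nonneg (by norm_num) (sq_nonneg _))

theorem dualityGap_eq_zero_of_isMinOn {A : Matrix (Fin p) (Fin n) ℝ} {lam : Fin p → ℝ}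
    (hmono : Antitone lam) (hnonneg : ∀ j, 0 ≤ lam j) {j : Fin p} (hj : 0 < lam j)
    {y : Fin n → ℝ} {θ : Fin p → ℝ} (hθmem : dualSlopeNorm lam θ ≤ 1)
    (hθ : IsMinOn (fun θ => (1 / 2) * enorm2 (Aᵀ *ᵥ θ - y) ^ 2)
      {θ | dualSlopeNorm lam θ ≤ 1} θ) :
    dualityGap A lam y (y - Aᵀ *ᵥ θ) θ = 0 := by
  obtain ⟨θ', hθ'mem, hθ'⟩ :=
    exists_dualSlopeNorm_le_one_dotProduct_eq hmono hnonneg (A *ᵥ (y - Aᵀ *ᵥ θ))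
  have hopt := dotProduct_mulVec_sub_nonneg_of_isMinOn
    (convex_setOf_dualSlopeNorm_le_one hmono hnonneg hj) hθmem hθ'mem hθ
  rw [← neg_sub, neg_dotProduct, dotProduct_mulVec, vecMul_transpose, dotProduct_comm,
    sub_dotProduct, hθ', Left.nonneg_neg_iff, sub_nonpos] at hopt
  rw [dualityGap_eq, sub_sub_cancel, sub_self, enorm2_sq, dotProduct_zero, mul_zero, add_zero,
    sub_eq_zero]
  exact le_antisymm (dotProduct_le_slopeNorm hmono hnonneg hj hθmem _) hopt |>.symm

end Duality

theorem statement_18_general {n p : ℕ} (G : GraphOn n p)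
    (lam : Fin p → ℝ) (hmono : Antitone lam) (hnonneg : ∀ j, 0 ≤ lam j) (hne : lam ≠ 0)
    (y : Fin n → ℝ) (θhat : Fin p → ℝ)
    (hθmem : dualSlopeNorm lam θhat ≤ 1)
    (hθ : IsMinOn (fun θ : Fin p → ℝ => (1 / 2) * (enorm2 (G.incTᵀ.mulVec θ - y)) ^ 2)
      {θ : Fin p → ℝ | dualSlopeNorm lam θ ≤ 1} θhat) :
    IsMinOn (fun β : Fin n → ℝ =>
        (1 / 2) * (enorm2 (y - β)) ^ 2 + slopeNorm lam (G.incT.mulVec β))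
      Set.univ (y - G.incTᵀ.mulVec θhat) ∧
    (1 / 2) * (enorm2 (y - (y - G.incTᵀ.mulVec θhat))) ^ 2 +
        slopeNorm lam (G.incT.mulVec (y - G.incTᵀ.mulVec θhat)) +
        (1 / 2) * (enorm2 (G.incTᵀ.mulVec θhat - y)) ^ 2 -
        (1 / 2) * (enorm2 y) ^ 2 = 0 := by
  obtain ⟨j, hj₀⟩ := Function.ne_iff.1 hne
  have hj : 0 < lam j := (hnonneg j).lt_of_ne' hj₀
  have hgap := dualityGap_eq_zero_of_isMinOn hmono hnonneg hj hθmem hθ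
  refine ⟨isMinOn_univ_iff.2 fun β => ?_, hgap⟩
  have hweak := dualityGap_nonneg (A := G.incT) hmono hnonneg hj y β hθmem
  simp only [dualityGap] at hgap hweak
  linarith

/-- strong duality between the Graph-Slope primal and dual problems:
if `θ̂` minimizes `(1/2)‖Dθ - y‖²` over the dual ball, then `β̂ = y - Dθ̂` minimizes
the primal objective and the duality gap vanishes. -/
theorem statement_18 {n p : ℕ} (G : GraphOn n p) (hconn : G.toSimpleGraph.Connected)
    (lam : Fin p → ℝ) (hmono : Antitone lam) (hnonneg : ∀ j, 0 ≤ lam j) (hne : lam ≠ 0)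
    (y : Fin n → ℝ) (θhat : Fin p → ℝ)
    (hθmem : dualSlopeNorm lam θhat ≤ 1)
    (hθ : IsMinOn (fun θ : Fin p → ℝ => (1 / 2) * (enorm2 (G.incTᵀ.mulVec θ - y)) ^ 2)
      {θ : Fin p → ℝ | dualSlopeNorm lam θ ≤ 1} θhat) :
    IsMinOn (fun β : Fin n → ℝ =>
        (1 / 2) * (enorm2 (y - β)) ^ 2 + slopeNorm lam (G.incT.mulVec β))
      Set.univ (y - G.incTᵀ.mulVec θhat) ∧
    (1 / 2) * (enorm2 (y - (y - G.incTᵀ.mulVec θhat))) ^ 2 +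
        slopeNorm lam (G.incT.mulVec (y - G.incTᵀ.mulVec θhat)) +
        (1 / 2) * (enorm2 (G.incTᵀ.mulVec θhat - y)) ^ 2 -
        (1 / 2) * (enorm2 y) ^ 2 = 0 :=
  statement_18_general G lam hmono hnonneg hne y θhat hθmem hθ
end
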